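/- Assume the poset of contexts of A satisfies the descending chain condition: every decreasing sequence C₁ ⊇ C₂ ⊇ C₃ ⊇ ⋯ of contexts is eventually constant. Then Σ* is a sober space: every nonempty irreducible closed subset of Σ* is the closure of a unique point of Σ*. In particular this holds whenever A is finite-dimensional. -/

import Mathlib

/-!
Closed subsets of `Σ*` are upward closed along restriction, while down-sets of contexts and
preimages of opens of `Σ_{C₀}` under restriction are open. Given a closed irreducible `F`, the
chain condition provides a point `(C₀, λ₀) ∈ F` with `C₀` minimal; irreducibility, tested on
these two kinds of open sets, forces every `(C, λ) ∈ F` to satisfy `C₀ ⊆ C` and `λ|_{C₀} = λ₀`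
(the second via Hausdorffness of `Σ_{C₀}`). Hence `F` is the closure of `(C₀, λ₀)`, which is
`{(C, λ) | C₀ ⊆ C, λ|_{C₀} = λ₀}`. This description of point closures also shows that `Σ*` is
T₀, which gives uniqueness.
-/

open WeakDual

variable (A : Type*) [CStarAlgebra A]

/-- A classical context: a commutative unital closed star-subalgebra of `A`. -/
structure Context where
  carrier : Subalgebra ℂ A
  star_mem' : ∀ x ∈ carrier, star x ∈ carrier
  isClosed' : IsClosed (carrier : Set A)
  mul_comm' : ∀ x ∈ carrier, ∀ y ∈ carrier, x * y = y * x

variable {A}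

/-- The Gelfand spectrum of a context: the character space of `C`. -/
abbrev Context.Spec (C : Context A) : Type _ := characterSpace ℂ C.carrier

/-- The inclusion of a smaller context into a larger one, as a continuous linear map. -/
def Context.inclCLM {D C : Context A} (h : D.carrier ≤ C.carrier) :
    D.carrier →L[ℂ] C.carrier where
  toLinearMap := (Subalgebra.inclusion h).toLinearMap
  cont := continuous_induced_rng.mpr continuous_subtype_val

/-- Restriction of a character along an inclusion of contexts. -/
noncomputable def Context.restrictChar {D C : Context A} (h : D.carrier ≤ C.carrier)
    (lam : C.Spec) : D.Spec :=
  ⟨(lam : WeakDual ℂ C.carrier).comp (Context.inclCLM h), by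
    constructor
    · intro h0
      have h1 : (lam : WeakDual ℂ C.carrier).comp (Context.inclCLM h) (1 : D.carrier) = 0 := by
        rw [h0]; rfl
      have h2 : (lam : WeakDual ℂ C.carrier).comp (Context.inclCLM h) (1 : D.carrier) = 1 := by
        show lam ((Context.inclCLM h) (1 : D.carrier)) = 1
        have h3 : (Context.inclCLM h) (1 : D.carrier) = (1 : C.carrier) := rfl
        rw [h3]
        exact map_one lam
      rw [h1] at h2
      exact zero_ne_one h2
    · intro x y
      show lam ((Context.inclCLM h) (x * y)) = lam ((Context.inclCLM h) x) * lam ((Context.inclCLM h) y)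
      have h4 : (Context.inclCLM h) (x * y) = (Context.inclCLM h) x * (Context.inclCLM h) y := rfl
      rw [h4]
      exact map_mul lam _ _⟩

/-- The disjoint union of all Gelfand spectra of contexts. -/
abbrev SigmaSpace (A : Type*) [CStarAlgebra A] : Type _ := (C : Context A) × C.Spec

/-- The topology on the poset of contexts whose opens are the downward closed sets. -/
instance : TopologicalSpace (Context A) where
  IsOpen s := ∀ C ∈ s, ∀ D : Context A, D.carrier ≤ C.carrier → D ∈ s
  isOpen_univ := fun _ _ _ _ => trivial
  isOpen_inter := fun s t hs ht C hC D hD => ⟨hs C hC.1 D hD, ht C hC.2 D hD⟩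
  isOpen_sUnion := fun S hS C hC D hD => by
    obtain ⟨s, hsS, hCs⟩ := hC
    exact ⟨s, hsS, hS s hsS C hCs D hD⟩

/-- The topology `𝒪 Σ*` of the contravariant approach: a set is open iff each of its fibres
is open and it is closed under restriction of characters to smaller contexts. -/
instance : TopologicalSpace (SigmaSpace A) where
  IsOpen U := (∀ C : Context A, IsOpen {lam : C.Spec | Sigma.mk C lam ∈ U}) ∧
    ∀ (C D : Context A) (h : D.carrier ≤ C.carrier) (lam : C.Spec),
      Sigma.mk C lam ∈ U → Sigma.mk D (Context.restrictChar h lam) ∈ U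
  isOpen_univ := ⟨fun _ => isOpen_univ, fun _ _ _ _ _ => trivial⟩
  isOpen_inter := fun U V hU hV => ⟨fun C => (hU.1 C).inter (hV.1 C),
    fun C D h lam hm => ⟨hU.2 C D h lam hm.1, hV.2 C D h lam hm.2⟩⟩
  isOpen_sUnion := fun S hS => by
    constructor
    · intro C
      have h1 : {lam : C.Spec | Sigma.mk C lam ∈ ⋃₀ S} =
          ⋃ U ∈ S, {lam : C.Spec | Sigma.mk C lam ∈ U} := by
        ext lam; simp
      rw [h1]
      exact isOpen_biUnion fun U hU => (hS U hU).1 C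
    · rintro C D h lam ⟨U, hUS, hmU⟩
      exact ⟨U, hUS, (hS U hUS).2 C D h lam hmU⟩

namespace Context

lemma carrier_injective : Function.Injective (carrier : Context A → Subalgebra ℂ A) := by
  rintro ⟨⟩ ⟨⟩ h
  cases h
  rfl

lemma continuous_restrictChar {D C : Context A} (h : D.carrier ≤ C.carrier) :
    Continuous (restrictChar h : C.Spec → D.Spec) := by
  refine Continuous.subtype_mk ?_ _
  exact continuous_of_continuous_eval fun y =>
    (eval_continuous (inclCLM h y)).comp continuous_subtype_val

lemma wellFounded_carrier_lt_of_dcc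
    (hdcc : ∀ f : ℕ → Context A, (∀ k, (f (k + 1)).carrier ≤ (f k).carrier) →
      ∃ N, ∀ m, N ≤ m → f m = f N) :
    WellFounded fun D C : Context A => D.carrier < C.carrier :=
  wellFounded_iff_isEmpty_descending_chain.2 ⟨fun ⟨f, hf⟩ => by
    obtain ⟨N, hN⟩ := hdcc f fun k => (hf k).le
    exact (hf N).ne (congrArg carrier (hN (N + 1) N.le_succ))⟩

end Context

namespace SigmaSpace

lemma isOpen_iff {U : Set (SigmaSpace A)} : IsOpen U ↔
    (∀ C : Context A, IsOpen {lam : C.Spec | Sigma.mk C lam ∈ U}) ∧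
      ∀ (C D : Context A) (h : D.carrier ≤ C.carrier) (lam : C.Spec),
        Sigma.mk C lam ∈ U → Sigma.mk D (Context.restrictChar h lam) ∈ U :=
  Iff.rfl

lemma mem_of_isClosed_of_restrictChar_mem {F : Set (SigmaSpace A)} (hF : IsClosed F)
    {C D : Context A} (h : D.carrier ≤ C.carrier) {lam : C.Spec}
    (hm : Sigma.mk D (Context.restrictChar h lam) ∈ F) : Sigma.mk C lam ∈ F :=
  of_not_not fun hc => (isOpen_iff.1 hF.isOpen_compl).2 C D h lam hc hm

lemma isOpen_setOf_carrier_le (C : Context A) :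
    IsOpen {q : SigmaSpace A | q.1.carrier ≤ C.carrier} :=
  isOpen_iff.2 ⟨fun D => (isOpen_const : IsOpen {_lam : D.Spec | D.carrier ≤ C.carrier}),
    fun _ _ h _ hm => h.trans hm⟩

lemma isOpen_setOf_restrictChar_mem {C₀ : Context A} {V : Set C₀.Spec} (hV : IsOpen V) :
    IsOpen {q : SigmaSpace A | ∀ h : C₀.carrier ≤ q.1.carrier, Context.restrictChar h q.2 ∈ V} := by
  refine isOpen_iff.2 ⟨fun C => ?_, fun _ _ h _ hm h₀ => hm (h₀.trans h)⟩
  by_cases hC : C₀.carrier ≤ C.carrier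
  · convert hV.preimage (Context.continuous_restrictChar hC) using 1
    exact Set.ext fun _ => ⟨fun hm => hm hC, fun hm _ => hm⟩
  · convert isOpen_univ using 1
    exact Set.eq_univ_of_forall fun _ h => absurd h hC

lemma closure_singleton_eq (C₀ : Context A) (lam₀ : C₀.Spec) :
    closure {Sigma.mk C₀ lam₀} =
      {q : SigmaSpace A | ∃ h : C₀.carrier ≤ q.1.carrier, Context.restrictChar h q.2 = lam₀} := by
  have hclosed : IsClosed
      {q : SigmaSpace A | ∃ h : C₀.carrier ≤ q.1.carrier, Context.restrictChar h q.2 = lam₀} := by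
    convert (isOpen_setOf_restrictChar_mem (isOpen_compl_singleton (x := lam₀))).isClosed_compl
    simp only [Set.mem_compl_iff, Set.mem_singleton_iff, Set.compl_ofPred, not_forall, not_not]
  refine subset_antisymm (closure_minimal (Set.singleton_subset_iff.2 ⟨le_rfl, rfl⟩) hclosed) ?_
  rintro ⟨C, lam⟩ ⟨h, rfl⟩
  exact mem_of_isClosed_of_restrictChar_mem isClosed_closure h (subset_closure rfl)

instance : T0Space (SigmaSpace A) where
  t0 := by
    rintro ⟨C, lam⟩ ⟨D, mu⟩ hsep
    have hCD : Sigma.mk D mu ∈ closure {Sigma.mk C lam} :=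
      (inseparable_iff_closure_eq.1 hsep).symm ▸ subset_closure rfl
    have hDC : Sigma.mk C lam ∈ closure {Sigma.mk D mu} :=
      (inseparable_iff_closure_eq.1 hsep) ▸ subset_closure rfl
    rw [closure_singleton_eq] at hCD hDC
    obtain ⟨hCD, rfl⟩ := hCD
    obtain ⟨hDC, -⟩ := hDC
    obtain rfl := Context.carrier_injective (le_antisymm hCD hDC)
    rfl

variable {F : Set (SigmaSpace A)}

lemma _root_.IsPreirreducible.sigmaSpace_carrier_le_of_minimal (hF : IsPreirreducible F)
    {p q : SigmaSpace A} (hp : p ∈ F) (hmin : ∀ r ∈ F, ¬r.1.carrier < p.1.carrier) (hq : q ∈ F) :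
    p.1.carrier ≤ q.1.carrier := by
  obtain ⟨r, hrF, hrp, hrq⟩ := hF _ _ (isOpen_setOf_carrier_le p.1) (isOpen_setOf_carrier_le q.1)
    ⟨p, hp, le_refl p.1.carrier⟩ ⟨q, hq, le_refl q.1.carrier⟩
  exact (hrp.eq_of_not_lt (hmin r hrF)).symm.le.trans hrq

lemma _root_.IsPreirreducible.sigmaSpace_restrictChar_eq (hF : IsPreirreducible F)
    {C₀ : Context A} {lam₀ : C₀.Spec} (h₀ : Sigma.mk C₀ lam₀ ∈ F)
    (hleast : ∀ q ∈ F, C₀.carrier ≤ q.1.carrier) {q : SigmaSpace A} (hq : q ∈ F)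
    (h : C₀.carrier ≤ q.1.carrier) : Context.restrictChar h q.2 = lam₀ := by
  by_contra hne
  obtain ⟨V, V', hV, hV', hqV, h₀V', hVV'⟩ := t2_separation hne
  obtain ⟨r, hrF, hrV, hrV'⟩ := hF _ _ (isOpen_setOf_restrictChar_mem hV)
    (isOpen_setOf_restrictChar_mem hV') ⟨q, hq, fun _ => hqV⟩ ⟨_, h₀, fun _ => h₀V'⟩
  exact Set.disjoint_left.1 hVV' (hrV (hleast r hrF)) (hrV' (hleast r hrF))

lemma isGenericPoint_of_minimal (hF : IsPreirreducible F) (hFc : IsClosed F) {p : SigmaSpace A}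
    (hp : p ∈ F) (hmin : ∀ r ∈ F, ¬r.1.carrier < p.1.carrier) : IsGenericPoint p F := by
  obtain ⟨C₀, lam₀⟩ := p
  have hleast : ∀ q ∈ F, C₀.carrier ≤ q.1.carrier := fun q hq =>
    hF.sigmaSpace_carrier_le_of_minimal hp hmin hq
  rw [isGenericPoint_def, closure_singleton_eq]
  refine Set.ext fun q =>
    ⟨?_, fun hq => ⟨hleast q hq, hF.sigmaSpace_restrictChar_eq hp hleast hq _⟩⟩
  rintro ⟨h, hq⟩
  exact mem_of_isClosed_of_restrictChar_mem hFc h (hq ▸ hp)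

theorem quasiSober_of_wellFounded (wf : WellFounded fun D C : Context A => D.carrier < C.carrier) :
    QuasiSober (SigmaSpace A) where
  sober {F} hF hFc := by
    obtain ⟨p, hp, hmin⟩ := (InvImage.wf Sigma.fst wf).has_min F hF.nonempty
    exact ⟨p, isGenericPoint_of_minimal hF.isPreirreducible hFc hp hmin⟩

end SigmaSpace

/-- If the poset of contexts of `A` satisfies the descending chain
condition (every decreasing sequence of contexts is eventually constant), then `Σ*` is a
sober space: every irreducible closed subset is the closure of a unique point. -/
theorem statement14
    (hdcc : ∀ f : ℕ → Context A, (∀ k, (f (k + 1)).carrier ≤ (f k).carrier) →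
      ∃ N, ∀ m, N ≤ m → f m = f N) :
    ∀ F : Set (SigmaSpace A), IsClosed F → IsIrreducible F →
      ∃! p : SigmaSpace A, F = closure {p} := by
  intro F hFc hFi
  have := SigmaSpace.quasiSober_of_wellFounded (Context.wellFounded_carrier_lt_of_dcc hdcc)
  obtain ⟨p, hp⟩ := QuasiSober.sober hFi hFc
  exact ⟨p, hp.symm, fun q hq => (isGenericPoint_def.2 hq.symm).eq hp⟩
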